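/- Let 1 < p < 2, a > 0, ℓ > 0, M > 0, and let B = B_{2R}(X₀) ⊂ ℝ^N be a ball. Suppose u ∈ L^∞(B) with |u| ≤ M a.e., χ : B → [0,1] is measurable, and V, W ∈ L^p(B; ℝ^N) satisfy ∫_B ‖V‖^{p−2} V · (V − W) = ∫_B (a u + ℓ χ)(V_N − W_N) and ∫_B ‖W‖^{p−2} W · (V − W) = 0 (with the convention ‖ξ‖^{p−2}ξ = 0 when ξ = 0). Then there is a constant C > 0 depending only on p, N, a, ℓ, M such that ∫_B ‖V − W‖^p ≤ C |B|^{p−1} ( ∫_B ‖V‖^p )^{2−p}, where |B| denotes the Lebesgue measure of B. -/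

import Mathlib

/-!
Write `D = ∫ ‖V - W‖² (‖V‖ + ‖W‖)^(p-2)`. Subtracting the two equations and using the coercivity
`(p - 1) ‖ξ - η‖² (‖ξ‖ + ‖η‖)^(p-2) ≤ (‖ξ‖^(p-2) ξ - ‖η‖^(p-2) η) · (ξ - η)` gives
`(p - 1) D ≤ (a M + ℓ) ∫ ‖V - W‖ ≤ (a M + ℓ) |B|^((p-1)/p) (∫ ‖V - W‖^p)^(1/p)`.
Hölder's inequality with exponents `2/p` and `2/(2-p)` gives
`∫ ‖V - W‖^p ≤ D^(p/2) (∫ (‖V‖ + ‖W‖)^p)^((2-p)/2)`, and testing the equation of `W` with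
`V - W` and applying Young's inequality gives `∫ ‖W‖^p ≤ ∫ ‖V‖^p`. Combining these, the factor
`(∫ ‖V - W‖^p)^(1/2)` on the right is absorbed by the left-hand side.
-/

open MeasureTheory Metric Set Filter
open scoped RealInnerProductSpace Topology

noncomputable section

namespace PHarmonic

open Real

lemma rpow_sub_one_mul_self {x r : ℝ} (hx : 0 ≤ x) (hr : r ≠ 0) : x ^ (r - 1) * x = x ^ r := by
  rw [← rpow_add_one' hx (by simpa using hr), sub_add_cancel]

lemma rpow_sub_two_mul_self {x p : ℝ} (hx : 0 ≤ x) (hp : p ≠ 1) :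
    x ^ (p - 2) * x = x ^ (p - 1) := by
  rw [show p - 2 = p - 1 - 1 by ring, rpow_sub_one_mul_self hx (sub_ne_zero.2 hp)]

lemma rpow_sub_two_mul_sq {x p : ℝ} (hx : 0 ≤ x) (hp : p ≠ 0) : x ^ (p - 2) * x ^ 2 = x ^ p := by
  rw [← rpow_two, ← rpow_add' hx (by simpa using hp), sub_add_cancel]

/-- Concavity of `x ↦ x ^ q`: the slope of the chord over `[t, s]` is at least the derivative at
`s`, which is at least the derivative at `s + t`. -/
lemma mul_sub_mul_add_rpow_le_rpow_sub_rpow {q s t : ℝ} (hq0 : 0 < q) (hq1 : q ≤ 1)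
    (ht : 0 ≤ t) (hts : t ≤ s) :
    q * (s - t) * (s + t) ^ (q - 1) ≤ s ^ q - t ^ q := by
  rcases (ht.trans hts).eq_or_lt with hs | hs
  · obtain rfl : s = 0 := hs.symm
    obtain rfl : t = 0 := le_antisymm hts ht
    simp
  have tangent : t ^ q ≤ s ^ q - q * (s - t) * s ^ (q - 1) := by
    have h := rpow_one_add_le_one_add_mul_self (s := t / s - 1)
      (by linarith [div_nonneg ht hs.le]) hq0.le hq1
    rw [add_sub_cancel, div_rpow ht hs.le, div_le_iff₀ (rpow_pos_of_pos hs q)] at h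
    rw [rpow_sub_one hs.ne']
    calc t ^ q ≤ (1 + q * (t / s - 1)) * s ^ q := h
      _ = s ^ q - q * (s - t) * (s ^ q / s) := by field_simp; ring
  have hmono : (s + t) ^ (q - 1) ≤ s ^ (q - 1) :=
    rpow_le_rpow_of_nonpos hs (by linarith) (by linarith)
  nlinarith [mul_le_mul_of_nonneg_left hmono (by nlinarith : 0 ≤ q * (s - t))]

lemma coercivity_scalar_of_le {p s t c : ℝ} (hp1 : 1 < p) (hp2 : p ≤ 2)
    (ht : 0 ≤ t) (hts : t ≤ s) (hc : |c| ≤ s * t) :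
    (p - 1) * (s ^ 2 + t ^ 2 - 2 * c) * (s + t) ^ (p - 2)
      ≤ s ^ p + t ^ p - (s ^ (p - 2) + t ^ (p - 2)) * c := by
  have hs : 0 ≤ s := ht.trans hts
  have hst : 0 ≤ s + t := add_nonneg hs ht
  have hs1 := rpow_sub_two_mul_self hs hp1.ne'
  have ht1 := rpow_sub_two_mul_self ht hp1.ne'
  have hs2 := rpow_sub_one_mul_self hs (by positivity : p ≠ 0)
  have ht2 := rpow_sub_one_mul_self ht (by positivity : p ≠ 0)
  -- the two sides are affine in `c`, so it suffices to compare them at `c = s t` and `c = -s t`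
  have at_pos : (p - 1) * (s - t) ^ 2 * (s + t) ^ (p - 2)
      ≤ s ^ p + t ^ p - (s ^ (p - 2) + t ^ (p - 2)) * (s * t) := by
    have h := mul_sub_mul_add_rpow_le_rpow_sub_rpow (q := p - 1) (by linarith) (by linarith)
      ht hts
    rw [show p - 1 - 1 = p - 2 by ring] at h
    nlinarith [mul_le_mul_of_nonneg_left h (sub_nonneg.2 hts)]
  have at_neg : (p - 1) * (s + t) ^ 2 * (s + t) ^ (p - 2)
      ≤ s ^ p + t ^ p + (s ^ (p - 2) + t ^ (p - 2)) * (s * t) := by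
    have h := rpow_add_le_add_rpow hs ht (by linarith : 0 ≤ p - 1) (by linarith)
    rw [mul_assoc, mul_comm ((s + t) ^ 2), rpow_sub_two_mul_sq hst (by positivity)]
    nlinarith [mul_le_mul_of_nonneg_left h hst, rpow_sub_one_mul_self hst (by positivity : p ≠ 0),
      rpow_nonneg hst p]
  obtain ⟨hc1, hc2⟩ := abs_le.1 hc
  rcases le_total (s ^ (p - 2) + t ^ (p - 2)) (2 * (p - 1) * (s + t) ^ (p - 2)) with h | h
  · nlinarith [mul_nonneg (by linarith : 0 ≤ c + s * t) (sub_nonneg.2 h)]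
  · nlinarith [mul_nonneg (by linarith : 0 ≤ s * t - c) (sub_nonneg.2 h)]

lemma coercivity_scalar {p s t c : ℝ} (hp1 : 1 < p) (hp2 : p ≤ 2)
    (hs : 0 ≤ s) (ht : 0 ≤ t) (hc : |c| ≤ s * t) :
    (p - 1) * (s ^ 2 + t ^ 2 - 2 * c) * (s + t) ^ (p - 2)
      ≤ s ^ p + t ^ p - (s ^ (p - 2) + t ^ (p - 2)) * c := by
  rcases le_total t s with h | h
  · exact coercivity_scalar_of_le hp1 hp2 ht h hc
  · have := coercivity_scalar_of_le hp1 hp2 hs h (by rwa [mul_comm])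
    rw [add_comm t s] at this
    linarith

lemma rpow_sub_one_mul_le {a b p : ℝ} (ha : 0 ≤ a) (hb : 0 ≤ b) (hp : 1 < p) :
    a ^ (p - 1) * b ≤ ((p - 1) * a ^ p + b ^ p) / p := by
  have h := young_inequality_of_nonneg (rpow_nonneg ha (p - 1)) hb
    (HolderConjugate.conjExponent hp).symm
  rw [← rpow_mul ha, Real.conjExponent, mul_div_cancel₀ _ (by linarith : p - 1 ≠ 0),
    div_div_eq_mul_div, ← add_div] at h
  convert h using 1; ring

lemma add_rpow_le_two_rpow_mul {a b p : ℝ} (ha : 0 ≤ a) (hb : 0 ≤ b) (hp : 1 ≤ p) :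
    (a + b) ^ p ≤ 2 ^ (p - 1) * (a ^ p + b ^ p) := by
  lift a to NNReal using ha
  lift b to NNReal using hb
  exact_mod_cast NNReal.rpow_add_le_mul_rpow_add_rpow a b hp

lemma sq_mul_rpow_le_rpow {d s p : ℝ} (hd : 0 ≤ d) (hds : d ≤ s) (hp : p ≠ 0) :
    d ^ 2 * s ^ (p - 2) ≤ s ^ p := by
  rw [← rpow_sub_two_mul_sq (hd.trans hds) hp, mul_comm]
  gcongr
  exact rpow_nonneg (hd.trans hds) _

lemma rpow_eq_sq_mul_rpow_rpow_mul {d s p : ℝ} (hd : 0 ≤ d) (hds : d ≤ s) (hp : 0 < p) :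
    d ^ p = (d ^ 2 * s ^ (p - 2)) ^ (p / 2) * (s ^ p) ^ ((2 - p) / 2) := by
  rcases (hd.trans hds).eq_or_lt with hs | hs
  · obtain rfl : s = 0 := hs.symm
    obtain rfl : d = 0 := le_antisymm hds hd
    simp [zero_rpow hp.ne', zero_rpow (div_pos hp two_pos).ne']
  rw [mul_rpow (by positivity) (by positivity), ← rpow_two, ← rpow_mul hd, ← rpow_mul hs.le,
    ← rpow_mul hs.le, mul_assoc, ← rpow_add hs]
  ring_nf
  simp

lemma le_of_le_rpow_of_le_mul_rpow {p C I D S m : ℝ} (hp0 : 0 < p) (hC : 0 ≤ C)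
    (hI : 0 ≤ I) (hD : 0 ≤ D) (hS : 0 ≤ S) (hm : 0 ≤ m)
    (hID : I ≤ D ^ (p / 2) * S ^ ((2 - p) / 2))
    (hDI : D ≤ C * I ^ (1 / p) * m ^ ((p - 1) / p)) :
    I ≤ C ^ p * m ^ (p - 1) * S ^ (2 - p) := by
  set K := C ^ (p / 2) * m ^ ((p - 1) / 2) * S ^ ((2 - p) / 2)
  have hK : 0 ≤ K := by positivity
  have hIK : I ≤ √I * K := by
    calc I ≤ (C * I ^ (1 / p) * m ^ ((p - 1) / p)) ^ (p / 2) * S ^ ((2 - p) / 2) := by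
          refine hID.trans ?_
          gcongr
      _ = √I * K := by
          rw [sqrt_eq_rpow, mul_rpow (by positivity) (by positivity),
            mul_rpow hC (by positivity), ← rpow_mul hI, ← rpow_mul hm]
          field_simp
          ring
  have hsqrt : √I ≤ K := by
    rcases hI.eq_or_lt with h0 | hpos
    · rw [← h0, sqrt_zero]; exact hK
    · have : √I * √I ≤ √I * K := by rwa [mul_self_sqrt hI]
      exact le_of_mul_le_mul_left this (sqrt_pos.2 hpos)
  calc I ≤ K ^ 2 := sqrt_le_iff.1 hsqrt |>.2
    _ = C ^ p * m ^ (p - 1) * S ^ (2 - p) := by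
      simp only [K, mul_pow, ← rpow_mul_natCast hC, ← rpow_mul_natCast hm,
        ← rpow_mul_natCast hS]
      norm_num

section InnerProduct

variable {E : Type*} [NormedAddCommGroup E] [InnerProductSpace ℝ E]

lemma coercivity_inner {p : ℝ} (hp1 : 1 < p) (hp2 : p ≤ 2) (ξ η : E) :
    (p - 1) * ‖ξ - η‖ ^ 2 * (‖ξ‖ + ‖η‖) ^ (p - 2)
      ≤ ‖ξ‖ ^ (p - 2) * ⟪ξ, ξ - η⟫ - ‖η‖ ^ (p - 2) * ⟪η, ξ - η⟫ := by
  have h := coercivity_scalar hp1 hp2 (norm_nonneg ξ) (norm_nonneg η)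
    (abs_real_inner_le_norm ξ η)
  rw [← rpow_sub_two_mul_sq (norm_nonneg ξ) (by positivity),
    ← rpow_sub_two_mul_sq (norm_nonneg η) (by positivity)] at h
  rw [norm_sub_sq_real, inner_sub_right, inner_sub_right, real_inner_self_eq_norm_sq,
    real_inner_self_eq_norm_sq, real_inner_comm ξ η]
  linear_combination h

lemma abs_rpow_sub_two_mul_inner_le {p : ℝ} (hp : 1 < p) (η ζ : E) :
    |‖η‖ ^ (p - 2) * ⟪η, ζ⟫| ≤ ((p - 1) * ‖η‖ ^ p + ‖ζ‖ ^ p) / p :=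
  calc |‖η‖ ^ (p - 2) * ⟪η, ζ⟫| ≤ ‖η‖ ^ (p - 2) * (‖η‖ * ‖ζ‖) := by
        rw [abs_mul, abs_of_nonneg (by positivity)]
        gcongr
        exact abs_real_inner_le_norm η ζ
    _ = ‖η‖ ^ (p - 1) * ‖ζ‖ := by rw [← mul_assoc, rpow_sub_two_mul_self (norm_nonneg η) hp.ne']
    _ ≤ _ := rpow_sub_one_mul_le (norm_nonneg η) (norm_nonneg ζ) hp

end InnerProduct

section Integrals

variable {α : Type*} [MeasurableSpace α] {μ : Measure α}

lemma memLp_ofReal_of_integrable_rpow {f : α → ℝ} {r : ℝ} (hr : 0 < r) (hf0 : 0 ≤ f)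
    (hfm : AEStronglyMeasurable f μ) (hfi : Integrable (fun x => f x ^ r) μ) :
    MemLp f (ENNReal.ofReal r) μ := by
  rw [← integrable_norm_rpow_iff hfm (by simpa using hr) ENNReal.ofReal_ne_top,
    ENNReal.toReal_ofReal hr.le]
  simpa only [Real.norm_of_nonneg (hf0 _)] using hfi

lemma _root_.MeasureTheory.MemLp.integrable_norm_rpow_ofReal {F : Type*} [NormedAddCommGroup F]
    {f : α → F} {p : ℝ} (hf : MemLp f (ENNReal.ofReal p) μ) (hp : 0 < p) :
    Integrable (fun x => ‖f x‖ ^ p) μ := by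
  simpa [ENNReal.toReal_ofReal hp.le] using
    hf.integrable_norm_rpow (by simpa using hp) ENNReal.ofReal_ne_top

lemma integral_mul_le_of_integrable_rpow {r s : ℝ} (hrs : r.HolderConjugate s) {f g : α → ℝ}
    (hf0 : 0 ≤ f) (hg0 : 0 ≤ g) (hfm : AEMeasurable f μ) (hgm : AEMeasurable g μ)
    (hfi : Integrable (fun x => f x ^ r) μ) (hgi : Integrable (fun x => g x ^ s) μ) :
    ∫ x, f x * g x ∂μ ≤ (∫ x, f x ^ r ∂μ) ^ (1 / r) * (∫ x, g x ^ s ∂μ) ^ (1 / s) :=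
  integral_mul_le_Lp_mul_Lq_of_nonneg hrs (ae_of_all _ hf0) (ae_of_all _ hg0)
    (memLp_ofReal_of_integrable_rpow hrs.pos hf0 hfm.aestronglyMeasurable hfi)
    (memLp_ofReal_of_integrable_rpow hrs.symm.pos hg0 hgm.aestronglyMeasurable hgi)

lemma integral_le_integral_rpow_mul_measure [IsFiniteMeasure μ] {f : α → ℝ} {p : ℝ} (hp : 1 < p)
    (hf0 : 0 ≤ f) (hfm : AEMeasurable f μ) (hfi : Integrable (fun x => f x ^ p) μ) :
    ∫ x, f x ∂μ ≤ (∫ x, f x ^ p ∂μ) ^ (1 / p) * (μ.real univ) ^ ((p - 1) / p) := by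
  have h := integral_mul_le_of_integrable_rpow (HolderConjugate.conjExponent hp) hf0
    (g := fun _ => 1) (fun _ => zero_le_one) hfm aemeasurable_const hfi (by simp)
  simpa [Real.conjExponent, one_div_div] using h

lemma integral_rpow_le_integral_sq_mul_rpow {d s : α → ℝ} {p : ℝ} (hp0 : 0 < p) (hp2 : p < 2)
    (hd : 0 ≤ d) (hds : d ≤ s) (hdm : AEMeasurable d μ) (hsm : AEMeasurable s μ)
    (hsi : Integrable (fun x => s x ^ p) μ) :
    ∫ x, d x ^ p ∂μ
      ≤ (∫ x, d x ^ 2 * s x ^ (p - 2) ∂μ) ^ (p / 2) * (∫ x, s x ^ p ∂μ) ^ ((2 - p) / 2) := by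
  have hF0 : ∀ x, 0 ≤ d x ^ 2 * s x ^ (p - 2) :=
    fun x => mul_nonneg (sq_nonneg _) (rpow_nonneg ((hd x).trans (hds x)) _)
  have hFm : AEMeasurable (fun x => d x ^ 2 * s x ^ (p - 2)) μ := by fun_prop
  have hFi : Integrable (fun x => d x ^ 2 * s x ^ (p - 2)) μ := by
    refine hsi.mono' hFm.aestronglyMeasurable (ae_of_all _ fun x => ?_)
    rw [Real.norm_of_nonneg (hF0 x)]
    exact sq_mul_rpow_le_rpow (hd x) (hds x) hp0.ne'
  have hconj : (2 / p).HolderConjugate (2 / (2 - p)) := by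
    rw [Real.holderConjugate_iff, inv_div, inv_div, ← add_div, add_sub_cancel, div_self two_ne_zero]
    exact ⟨(one_lt_div hp0).2 hp2, rfl⟩
  have hF : ∀ x, ((d x ^ 2 * s x ^ (p - 2)) ^ (p / 2)) ^ (2 / p) = d x ^ 2 * s x ^ (p - 2) :=
    fun x => by
      rw [← rpow_mul (hF0 x), div_mul_div_cancel₀ two_ne_zero, div_self hp0.ne', rpow_one]
  have hG : ∀ x, ((s x ^ p) ^ ((2 - p) / 2)) ^ (2 / (2 - p)) = s x ^ p := fun x => by
    rw [← rpow_mul (rpow_nonneg ((hd x).trans (hds x)) p), div_mul_div_cancel₀ two_ne_zero,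
      div_self (by linarith), rpow_one]
  have h := integral_mul_le_of_integrable_rpow (μ := μ) hconj
    (f := fun x => (d x ^ 2 * s x ^ (p - 2)) ^ (p / 2)) (g := fun x => (s x ^ p) ^ ((2 - p) / 2))
    (fun x => rpow_nonneg (hF0 x) _) (fun x => rpow_nonneg (rpow_nonneg ((hd x).trans (hds x)) p) _)
    (by fun_prop) (by fun_prop) (by simpa only [hF] using hFi) (by simpa only [hG] using hsi)
  simp only [hF, hG, one_div_div] at h
  calc ∫ x, d x ^ p ∂μ
      = ∫ x, (d x ^ 2 * s x ^ (p - 2)) ^ (p / 2) * (s x ^ p) ^ ((2 - p) / 2) ∂μ :=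
        integral_congr_ae (ae_of_all _ fun x => rpow_eq_sq_mul_rpow_rpow_mul (hd x) (hds x) hp0)
    _ ≤ _ := h

lemma integral_mul_le_mul_integral_of_abs_le {f g k : α → ℝ} {K : ℝ} (hf : ∀ᵐ x ∂μ, |f x| ≤ K)
    (hg : ∀ x, |g x| ≤ k x) (hk : Integrable k μ) :
    ∫ x, f x * g x ∂μ ≤ K * ∫ x, k x ∂μ :=
  calc ∫ x, f x * g x ∂μ ≤ ‖∫ x, f x * g x ∂μ‖ := Real.le_norm_self _
    _ ≤ ∫ x, K * k x ∂μ := by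
        refine norm_integral_le_of_norm_le (hk.const_mul K) (hf.mono fun x hx => ?_)
        rw [norm_mul, Real.norm_eq_abs, Real.norm_eq_abs]
        exact mul_le_mul hx (hg x) (abs_nonneg _) ((abs_nonneg _).trans hx)
    _ = K * ∫ x, k x ∂μ := integral_const_mul K k

variable {E : Type*} [NormedAddCommGroup E] {p : ℝ} {V W : α → E}

lemma integrable_norm_add_norm_rpow (hp : 0 < p) (hV : MemLp V (ENNReal.ofReal p) μ)
    (hW : MemLp W (ENNReal.ofReal p) μ) :
    Integrable (fun x => (‖V x‖ + ‖W x‖) ^ p) μ := by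
  have hsum : MemLp (fun x => ‖V x‖ + ‖W x‖) (ENNReal.ofReal p) μ := hV.norm.add hW.norm
  simpa only [Real.norm_of_nonneg (add_nonneg (norm_nonneg _) (norm_nonneg _))] using
    hsum.integrable_norm_rpow_ofReal hp

lemma integral_norm_add_norm_rpow_le (hp : 1 ≤ p) (hV : MemLp V (ENNReal.ofReal p) μ)
    (hW : MemLp W (ENNReal.ofReal p) μ) :
    ∫ x, (‖V x‖ + ‖W x‖) ^ p ∂μ ≤ 2 ^ (p - 1) * (∫ x, ‖V x‖ ^ p ∂μ + ∫ x, ‖W x‖ ^ p ∂μ) := by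
  have hVi := hV.integrable_norm_rpow_ofReal (by linarith)
  have hWi := hW.integrable_norm_rpow_ofReal (by linarith)
  rw [← integral_add hVi hWi, ← integral_const_mul]
  exact integral_mono (integrable_norm_add_norm_rpow (by linarith) hV hW)
    ((hVi.add hWi).const_mul _)
    fun x => add_rpow_le_two_rpow_mul (norm_nonneg _) (norm_nonneg _) hp

variable [InnerProductSpace ℝ E]

lemma integrable_rpow_sub_two_mul_inner (hp : 1 < p) (hV : MemLp V (ENNReal.ofReal p) μ)
    (hW : MemLp W (ENNReal.ofReal p) μ) :
    Integrable (fun x => ‖V x‖ ^ (p - 2) * ⟪V x, W x⟫) μ := by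
  refine ((((hV.integrable_norm_rpow_ofReal (by linarith)).const_mul (p - 1)).add
    (hW.integrable_norm_rpow_ofReal (by linarith))).div_const p).mono' ?_
    (ae_of_all _ fun x => abs_rpow_sub_two_mul_inner_le hp (V x) (W x))
  exact ((hV.1.norm.aemeasurable.pow_const _).mul
    (hV.1.inner hW.1).aemeasurable).aestronglyMeasurable

lemma integral_norm_rpow_le_of_integral_inner_eq_zero (hp : 1 < p)
    (hV : MemLp V (ENNReal.ofReal p) μ) (hW : MemLp W (ENNReal.ofReal p) μ)
    (hWeq : ∫ x, ‖W x‖ ^ (p - 2) * ⟪W x, V x - W x⟫ ∂μ = 0) :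
    ∫ x, ‖W x‖ ^ p ∂μ ≤ ∫ x, ‖V x‖ ^ p ∂μ := by
  have hVi := hV.integrable_norm_rpow_ofReal (by linarith)
  have hWi := hW.integrable_norm_rpow_ofReal (by linarith)
  have hWV := integrable_rpow_sub_two_mul_inner hp hW hV
  have hsplit : ∀ x, ‖W x‖ ^ (p - 2) * ⟪W x, V x - W x⟫
      = ‖W x‖ ^ (p - 2) * ⟪W x, V x⟫ - ‖W x‖ ^ p := fun x => by
    rw [inner_sub_right, real_inner_self_eq_norm_sq, mul_sub,
      rpow_sub_two_mul_sq (norm_nonneg _) (by linarith)]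
  simp only [hsplit] at hWeq
  rw [integral_sub hWV hWi, sub_eq_zero] at hWeq
  have hyoung : ∫ x, ‖W x‖ ^ (p - 2) * ⟪W x, V x⟫ ∂μ
      ≤ ((p - 1) * ∫ x, ‖W x‖ ^ p ∂μ + ∫ x, ‖V x‖ ^ p ∂μ) / p := by
    rw [← integral_const_mul, ← integral_add (hWi.const_mul _) hVi, ← integral_div]
    exact integral_mono hWV (((hWi.const_mul _).add hVi).div_const _)
      fun x => (le_abs_self _).trans (abs_rpow_sub_two_mul_inner_le hp (W x) (V x))
  rw [hWeq, le_div_iff₀ (by linarith)] at hyoung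
  linarith

lemma mul_integral_sq_mul_rpow_le (hp1 : 1 < p) (hp2 : p ≤ 2)
    (hV : MemLp V (ENNReal.ofReal p) μ) (hW : MemLp W (ENNReal.ofReal p) μ) :
    (p - 1) * ∫ x, ‖V x - W x‖ ^ 2 * (‖V x‖ + ‖W x‖) ^ (p - 2) ∂μ
      ≤ ∫ x, ‖V x‖ ^ (p - 2) * ⟪V x, V x - W x⟫ ∂μ
        - ∫ x, ‖W x‖ ^ (p - 2) * ⟪W x, V x - W x⟫ ∂μ := by
  have hVW : MemLp (fun x => V x - W x) (ENNReal.ofReal p) μ := hV.sub hW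
  have := hV.1.norm.aemeasurable
  have := hW.1.norm.aemeasurable
  have := hVW.1.norm.aemeasurable
  have hGi : Integrable (fun x => ‖V x - W x‖ ^ 2 * (‖V x‖ + ‖W x‖) ^ (p - 2)) μ := by
    refine (integrable_norm_add_norm_rpow (by linarith) hV hW).mono'
      (by fun_prop : AEMeasurable _ μ).aestronglyMeasurable (ae_of_all _ fun x => ?_)
    rw [Real.norm_of_nonneg (by positivity)]
    exact sq_mul_rpow_le_rpow (norm_nonneg _) (norm_sub_le _ _) (by linarith)
  rw [← integral_const_mul, ← integral_sub (integrable_rpow_sub_two_mul_inner hp1 hV hVW)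
    (integrable_rpow_sub_two_mul_inner hp1 hW hVW)]
  refine integral_mono (hGi.const_mul _) ((integrable_rpow_sub_two_mul_inner hp1 hV hVW).sub
    (integrable_rpow_sub_two_mul_inner hp1 hW hVW)) fun x => ?_
  simpa only [mul_assoc] using coercivity_inner hp1 hp2 (V x) (W x)

theorem integral_norm_sub_rpow_le [IsFiniteMeasure μ] (hp1 : 1 < p) (hp2 : p < 2) {K : ℝ}
    (hK : 0 ≤ K) (hV : MemLp V (ENNReal.ofReal p) μ) (hW : MemLp W (ENNReal.ofReal p) μ)
    (hVeq : ∫ x, ‖V x‖ ^ (p - 2) * ⟪V x, V x - W x⟫ ∂μ ≤ K * ∫ x, ‖V x - W x‖ ∂μ)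
    (hWeq : ∫ x, ‖W x‖ ^ (p - 2) * ⟪W x, V x - W x⟫ ∂μ = 0) :
    ∫ x, ‖V x - W x‖ ^ p ∂μ
      ≤ (K / (p - 1)) ^ p * 2 ^ (p * (2 - p)) * μ.real univ ^ (p - 1)
        * (∫ x, ‖V x‖ ^ p ∂μ) ^ (2 - p) := by
  have hVW : MemLp (fun x => V x - W x) (ENNReal.ofReal p) μ := hV.sub hW
  have hS : ∫ x, (‖V x‖ + ‖W x‖) ^ p ∂μ ≤ 2 ^ p * ∫ x, ‖V x‖ ^ p ∂μ := by
    have h := integral_norm_add_norm_rpow_le hp1.le hV hW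
    have hWV := integral_norm_rpow_le_of_integral_inner_eq_zero hp1 hV hW hWeq
    have h2 : (2 : ℝ) ^ p = 2 ^ (p - 1) * 2 := by
      rw [← rpow_add_one two_ne_zero, sub_add_cancel]
    calc ∫ x, (‖V x‖ + ‖W x‖) ^ p ∂μ
        ≤ 2 ^ (p - 1) * (∫ x, ‖V x‖ ^ p ∂μ + ∫ x, ‖W x‖ ^ p ∂μ) := h
      _ ≤ 2 ^ (p - 1) * (∫ x, ‖V x‖ ^ p ∂μ + ∫ x, ‖V x‖ ^ p ∂μ) := by gcongr
      _ = 2 ^ p * ∫ x, ‖V x‖ ^ p ∂μ := by rw [h2]; ring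
  have hD : ∫ x, ‖V x - W x‖ ^ 2 * (‖V x‖ + ‖W x‖) ^ (p - 2) ∂μ
      ≤ K / (p - 1) * (∫ x, ‖V x - W x‖ ^ p ∂μ) ^ (1 / p) * μ.real univ ^ ((p - 1) / p) := by
    have hL := integral_le_integral_rpow_mul_measure hp1 (fun x => norm_nonneg (V x - W x))
      hVW.1.norm.aemeasurable (hVW.integrable_norm_rpow_ofReal (by linarith))
    have hcoer := mul_integral_sq_mul_rpow_le hp1 hp2.le hV hW
    rw [hWeq, sub_zero] at hcoer
    have h := hcoer.trans (hVeq.trans (mul_le_mul_of_nonneg_left hL hK))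
    rw [div_mul_eq_mul_div, div_mul_eq_mul_div, le_div_iff₀ (by linarith)]
    linear_combination h
  calc ∫ x, ‖V x - W x‖ ^ p ∂μ
      ≤ (K / (p - 1)) ^ p * μ.real univ ^ (p - 1) * (∫ x, (‖V x‖ + ‖W x‖) ^ p ∂μ) ^ (2 - p) := by
        refine le_of_le_rpow_of_le_mul_rpow (by linarith) (div_nonneg hK (by linarith))
          (integral_nonneg fun x => by positivity) (integral_nonneg fun x => by positivity)
          (integral_nonneg fun x => by positivity) measureReal_nonneg ?_ hD
        exact integral_rpow_le_integral_sq_mul_rpow (by linarith) hp2 (fun x => norm_nonneg _)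
          (fun x => norm_sub_le _ _) hVW.1.norm.aemeasurable
          (hV.1.norm.aemeasurable.add hW.1.norm.aemeasurable)
          (integrable_norm_add_norm_rpow (by linarith) hV hW)
    _ ≤ (K / (p - 1)) ^ p * μ.real univ ^ (p - 1) * (2 ^ p * ∫ x, ‖V x‖ ^ p ∂μ) ^ (2 - p) := by
        gcongr
    _ = _ := by
        rw [mul_rpow (by positivity) (integral_nonneg fun x => by positivity),
          ← rpow_mul two_pos.le]
        ring

end Integrals

end PHarmonic

open PHarmonic

/-- Comparison estimate with the `p`-harmonic replacement in the singular
case `1 < p < 2`: `∫_B ‖V − W‖^p ≤ C |B|^{p−1} ( ∫_B ‖V‖^p )^{2−p}`, with `C` depending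
only on `p, N, a, ℓ, M`. -/
theorem comparison_estimate_p_lt_two
    (N : ℕ) (hN : 2 ≤ N)
    (p a ℓ M : ℝ) (hp1 : 1 < p) (hp2 : p < 2) (ha : 0 < a) (hℓ : 0 < ℓ) (hM : 0 < M) :
    ∃ c : ℝ, 0 < c ∧
      ∀ (R : ℝ), 0 < R → ∀ (X₀ : EuclideanSpace ℝ (Fin N))
        (u χ : EuclideanSpace ℝ (Fin N) → ℝ)
        (V W : EuclideanSpace ℝ (Fin N) → EuclideanSpace ℝ (Fin N)),
        (∀ᵐ X ∂(volume.restrict (ball X₀ (2 * R))), |u X| ≤ M) →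
        Measurable χ → (∀ X, χ X ∈ Icc (0:ℝ) 1) →
        MemLp V (ENNReal.ofReal p) (volume.restrict (ball X₀ (2 * R))) →
        MemLp W (ENNReal.ofReal p) (volume.restrict (ball X₀ (2 * R))) →
        (∫ X in ball X₀ (2 * R), ‖V X‖ ^ (p - 2) * ⟪V X, V X - W X⟫
          = ∫ X in ball X₀ (2 * R),
              (a * u X + ℓ * χ X) * (V X ⟨N - 1, by omega⟩ - W X ⟨N - 1, by omega⟩)) →
        (∫ X in ball X₀ (2 * R), ‖W X‖ ^ (p - 2) * ⟪W X, V X - W X⟫ = 0) →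
        ∫ X in ball X₀ (2 * R), ‖V X - W X‖ ^ p ≤
          c * (volume (ball X₀ (2 * R))).toReal ^ (p - 1) *
            (∫ X in ball X₀ (2 * R), ‖V X‖ ^ p) ^ (2 - p) := by
  have hK : 0 < a * M + ℓ := by positivity
  refine ⟨((a * M + ℓ) / (p - 1)) ^ p * 2 ^ (p * (2 - p)),
    mul_pos (Real.rpow_pos_of_pos (div_pos hK (by linarith)) _)
      (Real.rpow_pos_of_pos two_pos _), ?_⟩
  intro R _ X₀ u χ V W hu _ hχ hV hW hVeq hWeq
  have : IsFiniteMeasure (volume.restrict (ball X₀ (2 * R))) :=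
    isFiniteMeasure_restrict.2 measure_ball_lt_top.ne
  have hforce : ∫ X in ball X₀ (2 * R), ‖V X‖ ^ (p - 2) * ⟪V X, V X - W X⟫
      ≤ (a * M + ℓ) * ∫ X in ball X₀ (2 * R), ‖V X - W X‖ := by
    rw [hVeq]
    refine integral_mul_le_mul_integral_of_abs_le ?_ (fun X => ?_)
      ((hV.sub hW).integrable (ENNReal.one_le_ofReal.2 hp1.le)).norm
    · filter_upwards [hu] with X hX
      obtain ⟨hu1, hu2⟩ := abs_le.1 hX
      obtain ⟨hχ0, hχ1⟩ := hχ X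
      rw [abs_le]
      constructor <;> nlinarith
    · rw [← PiLp.sub_apply, ← Real.norm_eq_abs]
      exact PiLp.norm_apply_le _ _
  simpa [measureReal_def] using integral_norm_sub_rpow_le hp1 hp2 hK.le hV hW hforce hWeq
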